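/- arXiv:1304.2242 — 2 statements merged into one kernel-verified Lean document; each statement's English description precedes it below -/
import Mathlib

section
/- Let φ, ψ : ℝ² → ℝ be smooth functions with vanishing 1-jet at the origin. Then the intrinsic Gaussian curvature at the origin of the surface (x,y) ↦ (x,y,φ(x,y),ψ(x,y)) in ℝ⁴ equals Hess(φ)(0) + Hess(ψ)(0), where Hess(f) = fₓₓf_yy − fₓy². Equivalently, the curvature of the graph surface equals the sum of the curvatures of the projections along the two normal coordinate directions. -/
noncomputable def pdx (f : ℝ → ℝ → ℝ) : ℝ → ℝ → ℝ := fun x y => deriv (fun t => f t y) x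
noncomputable def pdy (f : ℝ → ℝ → ℝ) : ℝ → ℝ → ℝ := fun x y => deriv (fun t => f x t) y

def Sm (f : ℝ → ℝ → ℝ) : Prop := ContDiff ℝ (⊤ : ℕ∞) (fun p : ℝ × ℝ => f p.1 p.2)

lemma Sm.hasDerivAt_x {f} (h : Sm f) (x y : ℝ) :
    HasDerivAt (fun t => f t y) (fderiv ℝ (fun p : ℝ × ℝ => f p.1 p.2) (x, y) (1, 0)) x := by
  have h1 : HasDerivAt (fun t : ℝ => (t, y)) ((1:ℝ), (0:ℝ)) x :=
    (hasDerivAt_id x).prodMk (hasDerivAt_const x y)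
  exact ((h.differentiable (by simp) (x, y)).hasFDerivAt).comp_hasDerivAt x h1

lemma Sm.hasDerivAt_y {f} (h : Sm f) (x y : ℝ) :
    HasDerivAt (fun t => f x t) (fderiv ℝ (fun p : ℝ × ℝ => f p.1 p.2) (x, y) (0, 1)) y := by
  have h1 : HasDerivAt (fun t : ℝ => (x, t)) ((0:ℝ), (1:ℝ)) y :=
    (hasDerivAt_const y x).prodMk (hasDerivAt_id y)
  exact ((h.differentiable (by simp) (x, y)).hasFDerivAt).comp_hasDerivAt y h1

lemma Sm.pdx_eq {f} (h : Sm f) (x y : ℝ) :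
    pdx f x y = fderiv ℝ (fun p : ℝ × ℝ => f p.1 p.2) (x, y) (1, 0) :=
  (h.hasDerivAt_x x y).deriv

lemma Sm.pdy_eq {f} (h : Sm f) (x y : ℝ) :
    pdy f x y = fderiv ℝ (fun p : ℝ × ℝ => f p.1 p.2) (x, y) (0, 1) :=
  (h.hasDerivAt_y x y).deriv

lemma contDiff_fderiv_apply {F : ℝ × ℝ → ℝ} (h : ContDiff ℝ (⊤ : ℕ∞) F) (v : ℝ × ℝ) :
    ContDiff ℝ (⊤ : ℕ∞) (fun p => fderiv ℝ F p v) :=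
  (h.fderiv_right (by simp)).clm_apply contDiff_const

lemma Sm.pdx' {f} (h : Sm f) : Sm (pdx f) := by
  have : (fun p : ℝ × ℝ => pdx f p.1 p.2)
      = fun p => fderiv ℝ (fun p : ℝ × ℝ => f p.1 p.2) p (1, 0) := by
    funext p; exact h.pdx_eq p.1 p.2
  rw [Sm, this]; exact contDiff_fderiv_apply h _

lemma Sm.pdy' {f} (h : Sm f) : Sm (pdy f) := by
  have : (fun p : ℝ × ℝ => pdy f p.1 p.2)
      = fun p => fderiv ℝ (fun p : ℝ × ℝ => f p.1 p.2) p (0, 1) := by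
    funext p; exact h.pdy_eq p.1 p.2
  rw [Sm, this]; exact contDiff_fderiv_apply h _

lemma clairaut_aux {F : ℝ × ℝ → ℝ} (h : ContDiff ℝ (⊤ : ℕ∞) F) (p v w : ℝ × ℝ) :
    fderiv ℝ (fun q => fderiv ℝ F q v) p w = fderiv ℝ (fderiv ℝ F) p w v := by
  have hd : DifferentiableAt ℝ (fderiv ℝ F) p :=
    ((h.fderiv_right (m := 1) (by exact WithTop.coe_le_coe.mpr le_top)).differentiable (by simp)) p
  have := ((ContinuousLinearMap.apply ℝ ℝ v).hasFDerivAt.comp p hd.hasFDerivAt).fderiv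
  have h2 : (fun q => fderiv ℝ F q v) = (ContinuousLinearMap.apply ℝ ℝ v) ∘ (fderiv ℝ F) := rfl
  rw [h2, this]; rfl

lemma clairaut {F : ℝ × ℝ → ℝ} (h : ContDiff ℝ (⊤ : ℕ∞) F) (p v w : ℝ × ℝ) :
    fderiv ℝ (fun q => fderiv ℝ F q v) p w = fderiv ℝ (fun q => fderiv ℝ F q w) p v := by
  rw [clairaut_aux h, clairaut_aux h]
  exact second_derivative_symmetric (fun y => ((h.differentiable (by simp)) y).hasFDerivAt)
    (((h.fderiv_right (m := 1) (by exact WithTop.coe_le_coe.mpr le_top)).differentiable (by simp) p).hasFDerivAt) v w |>.symm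

lemma Sm.mixed {f} (h : Sm f) (x y : ℝ) : pdy (pdx f) x y = pdx (pdy f) x y := by
  have h1 := h.pdx'
  have h2 := h.pdy'
  rw [h1.pdy_eq, h2.pdx_eq]
  have e1 : (fun p : ℝ × ℝ => pdx f p.1 p.2)
      = fun q => fderiv ℝ (fun p : ℝ × ℝ => f p.1 p.2) q (1, 0) := by
    funext p; exact h.pdx_eq p.1 p.2
  have e2 : (fun p : ℝ × ℝ => pdy f p.1 p.2)
      = fun q => fderiv ℝ (fun p : ℝ × ℝ => f p.1 p.2) q (0, 1) := by
    funext p; exact h.pdy_eq p.1 p.2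
  rw [e1, e2]
  exact clairaut h (x, y) _ _

lemma Sm.hasDerivAt_y'' {f} (h : Sm f) (x y : ℝ) :
    HasDerivAt (fun t => f x t) (pdy f x y) y := by
  rw [h.pdy_eq]; exact h.hasDerivAt_y x y

lemma Sm.hasDerivAt_x'' {f} (h : Sm f) (x y : ℝ) :
    HasDerivAt (fun t => f t y) (pdx f x y) x := by
  rw [h.pdx_eq]; exact h.hasDerivAt_x x y


/-- The intrinsic Gaussian curvature (via Brioschi's formula, which at the origin reduces to
`-(1/2)E_yy + F_xy - (1/2)G_xx`) of the graph surface of `(φ,ψ)` in ℝ⁴ at the origin equals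
`Hess φ (0) + Hess ψ (0)`. -/
theorem gauss_curvature_sum_of_projections (φ ψ : ℝ → ℝ → ℝ)
    (hφ : ContDiff ℝ (⊤ : ℕ∞) (fun p : ℝ × ℝ => φ p.1 p.2))
    (hψ : ContDiff ℝ (⊤ : ℕ∞) (fun p : ℝ × ℝ => ψ p.1 p.2))
    (hφ0 : φ 0 0 = 0) (hψ0 : ψ 0 0 = 0)
    (hφx : pdx φ 0 0 = 0) (hφy : pdy φ 0 0 = 0)
    (hψx : pdx ψ 0 0 = 0) (hψy : pdy ψ 0 0 = 0)
    (E F G : ℝ → ℝ → ℝ)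
    (hE : ∀ x y, E x y = 1 + (pdx φ x y)^2 + (pdx ψ x y)^2)
    (hF : ∀ x y, F x y = pdx φ x y * pdy φ x y + pdx ψ x y * pdy ψ x y)
    (hG : ∀ x y, G x y = 1 + (pdy φ x y)^2 + (pdy ψ x y)^2)
    (KG : ℝ)
    (hKG : KG = -(1/2) * pdy (pdy E) 0 0 + pdy (pdx F) 0 0 - (1/2) * pdx (pdx G) 0 0) :
    KG = (pdx (pdx φ) 0 0 * pdy (pdy φ) 0 0 - (pdy (pdx φ) 0 0)^2)
       + (pdx (pdx ψ) 0 0 * pdy (pdy ψ) 0 0 - (pdy (pdx ψ) 0 0)^2) := by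
  have hΦ : Sm φ := hφ
  have hΨ : Sm ψ := hψ
  have ha : Sm (pdx φ) := hΦ.pdx'
  have hb : Sm (pdy φ) := hΦ.pdy'
  have hc : Sm (pdx ψ) := hΨ.pdx'
  have hd : Sm (pdy ψ) := hΨ.pdy'
  -- first derivatives of E, F, G
  have hEy : ∀ x y : ℝ, pdy E x y
      = (pdy (pdx φ) x y * pdx φ x y + pdx φ x y * pdy (pdx φ) x y)
      + (pdy (pdx ψ) x y * pdx ψ x y + pdx ψ x y * pdy (pdx ψ) x y) := by
    intro x y
    have h1 : HasDerivAt (fun t => E x t)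
        (0 + (pdy (pdx φ) x y * pdx φ x y + pdx φ x y * pdy (pdx φ) x y)
          + (pdy (pdx ψ) x y * pdx ψ x y + pdx ψ x y * pdy (pdx ψ) x y)) y := by
      have := (((hasDerivAt_const y (1:ℝ)).add
        ((ha.hasDerivAt_y'' x y).mul (ha.hasDerivAt_y'' x y))).add
        ((hc.hasDerivAt_y'' x y).mul (hc.hasDerivAt_y'' x y)))
      have heq : (fun t => 1 + pdx φ x t * pdx φ x t + pdx ψ x t * pdx ψ x t)
          = fun t => E x t := by
        funext t; rw [hE x t]; ring
      rw [← heq]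
      exact this
    have := h1.deriv
    rw [show pdy E x y = deriv (fun t => E x t) y from rfl, this]; ring
  have hGx : ∀ x y : ℝ, pdx G x y
      = (pdx (pdy φ) x y * pdy φ x y + pdy φ x y * pdx (pdy φ) x y)
      + (pdx (pdy ψ) x y * pdy ψ x y + pdy ψ x y * pdx (pdy ψ) x y) := by
    intro x y
    have h1 : HasDerivAt (fun t => G t y)
        (0 + (pdx (pdy φ) x y * pdy φ x y + pdy φ x y * pdx (pdy φ) x y)
          + (pdx (pdy ψ) x y * pdy ψ x y + pdy ψ x y * pdx (pdy ψ) x y)) x := by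
      have := (((hasDerivAt_const x (1:ℝ)).add
        ((hb.hasDerivAt_x'' x y).mul (hb.hasDerivAt_x'' x y))).add
        ((hd.hasDerivAt_x'' x y).mul (hd.hasDerivAt_x'' x y)))
      have heq : (fun t => 1 + pdy φ t y * pdy φ t y + pdy ψ t y * pdy ψ t y)
          = fun t => G t y := by
        funext t; rw [hG t y]; ring
      rw [← heq]
      exact this
    have := h1.deriv
    rw [show pdx G x y = deriv (fun t => G t y) x from rfl, this]; ring
  have hFx : ∀ x y : ℝ, pdx F x y
      = (pdx (pdx φ) x y * pdy φ x y + pdx φ x y * pdx (pdy φ) x y)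
      + (pdx (pdx ψ) x y * pdy ψ x y + pdx ψ x y * pdx (pdy ψ) x y) := by
    intro x y
    have h1 : HasDerivAt (fun t => F t y)
        ((pdx (pdx φ) x y * pdy φ x y + pdx φ x y * pdx (pdy φ) x y)
          + (pdx (pdx ψ) x y * pdy ψ x y + pdx ψ x y * pdx (pdy ψ) x y)) x := by
      have := (((ha.hasDerivAt_x'' x y).mul (hb.hasDerivAt_x'' x y)).add
        ((hc.hasDerivAt_x'' x y).mul (hd.hasDerivAt_x'' x y)))
      have heq : (fun t => pdx φ t y * pdy φ t y + pdx ψ t y * pdy ψ t y)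
          = fun t => F t y := by
        funext t; rw [hF t y]
      rw [← heq]
      exact this
    exact h1.deriv
  -- second derivatives at the origin
  have hEyy : pdy (pdy E) 0 0
      = 2 * (pdy (pdx φ) 0 0)^2 + 2 * (pdy (pdx ψ) 0 0)^2 := by
    have h1 : HasDerivAt (fun t => pdy E 0 t)
        ((pdy (pdy (pdx φ)) 0 0 * pdx φ 0 0 + pdy (pdx φ) 0 0 * pdy (pdx φ) 0 0
          + (pdy (pdx φ) 0 0 * pdy (pdx φ) 0 0 + pdx φ 0 0 * pdy (pdy (pdx φ)) 0 0))
        + (pdy (pdy (pdx ψ)) 0 0 * pdx ψ 0 0 + pdy (pdx ψ) 0 0 * pdy (pdx ψ) 0 0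
          + (pdy (pdx ψ) 0 0 * pdy (pdx ψ) 0 0 + pdx ψ 0 0 * pdy (pdy (pdx ψ)) 0 0))) 0 := by
      have := ((((ha.pdy'.hasDerivAt_y'' 0 0).mul (ha.hasDerivAt_y'' 0 0)).add
          ((ha.hasDerivAt_y'' 0 0).mul (ha.pdy'.hasDerivAt_y'' 0 0))).add
        ((((hc.pdy'.hasDerivAt_y'' 0 0).mul (hc.hasDerivAt_y'' 0 0)).add
          ((hc.hasDerivAt_y'' 0 0).mul (hc.pdy'.hasDerivAt_y'' 0 0)))))
      have heq : (fun t => (pdy (pdx φ) 0 t * pdx φ 0 t + pdx φ 0 t * pdy (pdx φ) 0 t)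
          + (pdy (pdx ψ) 0 t * pdx ψ 0 t + pdx ψ 0 t * pdy (pdx ψ) 0 t))
          = fun t => pdy E 0 t := by
        funext t; rw [hEy 0 t]
      rw [← heq]
      exact this
    have h2 := h1.deriv
    rw [show pdy (pdy E) 0 0 = deriv (fun t => pdy E 0 t) 0 from rfl, h2, hφx, hψx]; ring
  have hGxx : pdx (pdx G) 0 0
      = 2 * (pdx (pdy φ) 0 0)^2 + 2 * (pdx (pdy ψ) 0 0)^2 := by
    have h1 : HasDerivAt (fun t => pdx G t 0)
        ((pdx (pdx (pdy φ)) 0 0 * pdy φ 0 0 + pdx (pdy φ) 0 0 * pdx (pdy φ) 0 0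
          + (pdx (pdy φ) 0 0 * pdx (pdy φ) 0 0 + pdy φ 0 0 * pdx (pdx (pdy φ)) 0 0))
        + (pdx (pdx (pdy ψ)) 0 0 * pdy ψ 0 0 + pdx (pdy ψ) 0 0 * pdx (pdy ψ) 0 0
          + (pdx (pdy ψ) 0 0 * pdx (pdy ψ) 0 0 + pdy ψ 0 0 * pdx (pdx (pdy ψ)) 0 0))) 0 := by
      have := ((((hb.pdx'.hasDerivAt_x'' 0 0).mul (hb.hasDerivAt_x'' 0 0)).add
          ((hb.hasDerivAt_x'' 0 0).mul (hb.pdx'.hasDerivAt_x'' 0 0))).add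
        ((((hd.pdx'.hasDerivAt_x'' 0 0).mul (hd.hasDerivAt_x'' 0 0)).add
          ((hd.hasDerivAt_x'' 0 0).mul (hd.pdx'.hasDerivAt_x'' 0 0)))))
      have heq : (fun t => (pdx (pdy φ) t 0 * pdy φ t 0 + pdy φ t 0 * pdx (pdy φ) t 0)
          + (pdx (pdy ψ) t 0 * pdy ψ t 0 + pdy ψ t 0 * pdx (pdy ψ) t 0))
          = fun t => pdx G t 0 := by
        funext t; rw [hGx t 0]
      rw [← heq]
      exact this
    have h2 := h1.deriv
    rw [show pdx (pdx G) 0 0 = deriv (fun t => pdx G t 0) 0 from rfl, h2, hφy, hψy]; ring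
  have hFxy : pdy (pdx F) 0 0
      = pdx (pdx φ) 0 0 * pdy (pdy φ) 0 0 + pdy (pdx φ) 0 0 * pdx (pdy φ) 0 0
      + (pdx (pdx ψ) 0 0 * pdy (pdy ψ) 0 0 + pdy (pdx ψ) 0 0 * pdx (pdy ψ) 0 0) := by
    have h1 : HasDerivAt (fun t => pdx F 0 t)
        ((pdy (pdx (pdx φ)) 0 0 * pdy φ 0 0 + pdx (pdx φ) 0 0 * pdy (pdy φ) 0 0
          + (pdy (pdx φ) 0 0 * pdx (pdy φ) 0 0 + pdx φ 0 0 * pdy (pdx (pdy φ)) 0 0))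
        + (pdy (pdx (pdx ψ)) 0 0 * pdy ψ 0 0 + pdx (pdx ψ) 0 0 * pdy (pdy ψ) 0 0
          + (pdy (pdx ψ) 0 0 * pdx (pdy ψ) 0 0 + pdx ψ 0 0 * pdy (pdx (pdy ψ)) 0 0))) 0 := by
      have := ((((ha.pdx'.hasDerivAt_y'' 0 0).mul (hb.hasDerivAt_y'' 0 0)).add
          ((ha.hasDerivAt_y'' 0 0).mul (hb.pdx'.hasDerivAt_y'' 0 0))).add
        ((((hc.pdx'.hasDerivAt_y'' 0 0).mul (hd.hasDerivAt_y'' 0 0)).add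
          ((hc.hasDerivAt_y'' 0 0).mul (hd.pdx'.hasDerivAt_y'' 0 0)))))
      have heq : (fun t => (pdx (pdx φ) 0 t * pdy φ 0 t + pdx φ 0 t * pdx (pdy φ) 0 t)
          + (pdx (pdx ψ) 0 t * pdy ψ 0 t + pdx ψ 0 t * pdx (pdy ψ) 0 t))
          = fun t => pdx F 0 t := by
        funext t; rw [hFx 0 t]
      rw [← heq]
      exact this
    have h2 := h1.deriv
    rw [show pdy (pdx F) 0 0 = deriv (fun t => pdx F 0 t) 0 from rfl, h2, hφx, hφy, hψx, hψy]
    ring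
  have hmφ := hΦ.mixed 0 0
  have hmψ := hΨ.mixed 0 0
  rw [hKG, hEyy, hGxx, hFxy, ← hmφ, ← hmψ]
  ring
end

section
/- Let a,b,c,e,f,g be real numbers with Δ = (ac−b²)(eg−f²) − (1/4)(ag+ce−2bf)² = 0 and K = (ac−b²)+(eg−f²) ≥ 0. Then the matrix [[a,b,c],[e,f,g]] has rank at most 1. -/
/-!
Write `P = ac - b²`, `Q = eg - f²` and `B = ag + ce - 2bf`, so that `Δ = 0` reads `B² = 4PQ`,
and `K ≥ 0` together with `PQ = B²/4 ≥ 0` gives `P, Q ≥ 0`. The outer minors satisfy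
`(af - be)² = ae·B - e²P - a²Q` and `(bg - cf)² = cg·B - g²P - c²Q`; by AM–GM,
`|xy·B| = 2√(y²P · x²Q) ≤ y²P + x²Q`, so both right-hand sides are `≤ 0` and these minors
vanish. The middle minor follows from `(ag - ce)² - 4(af - be)(bg - cf) = -4Δ`.
-/

theorem Matrix.rank_le_one_of_mul_eq_mul {m n K : Type*} [Fintype n] [Field K]
    (M : Matrix m n K) (hM : ∀ i i' j j', M i j * M i' j' = M i j' * M i' j) :
    M.rank ≤ 1 := by
  by_cases hzero : M = 0
  · simp [hzero]
  obtain ⟨i₀, j₀, hij₀⟩ : ∃ i₀ j₀, M i₀ j₀ ≠ 0 := by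
    by_contra! h
    exact hzero (Matrix.ext h)
  have hvec : M = Matrix.vecMulVec (fun i => M i j₀ / M i₀ j₀) (M i₀) := by
    ext i j
    rw [Matrix.vecMulVec_apply, div_mul_eq_mul_div, eq_div_iff hij₀, hM i i₀ j j₀]
  rw [hvec]
  exact Matrix.rank_vecMulVec_le _ _

theorem eq_zero_of_sq_eq_mul_sub_of_sq_eq {P Q B x y m : ℝ} (hP : 0 ≤ P) (hQ : 0 ≤ Q)
    (hB : B ^ 2 = 4 * P * Q) (hm : m ^ 2 = x * y * B - y ^ 2 * P - x ^ 2 * Q) : m = 0 := by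
  have hsum : 0 ≤ y ^ 2 * P + x ^ 2 * Q := by positivity
  have hsq : (x * y * B) ^ 2 ≤ (y ^ 2 * P + x ^ 2 * Q) ^ 2 :=
    calc (x * y * B) ^ 2 = 4 * (y ^ 2 * P) * (x ^ 2 * Q) := by rw [mul_pow, hB]; ring
      _ ≤ (y ^ 2 * P + x ^ 2 * Q) ^ 2 := by nlinarith [sq_nonneg (y ^ 2 * P - x ^ 2 * Q)]
  have hle : x * y * B ≤ y ^ 2 * P + x ^ 2 * Q := le_of_sq_le_sq hsq hsum
  exact pow_eq_zero_iff two_ne_zero |>.mp (le_antisymm (by linarith) (sq_nonneg m))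

theorem delta_zero_K_nonneg_implies_inflection (a b c e f g : ℝ)
    (hΔ : (a*c - b^2) * (e*g - f^2) - (1/4) * (a*g + c*e - 2*b*f)^2 = 0)
    (hK : (a*c - b^2) + (e*g - f^2) ≥ 0) :
    Matrix.rank !![a, b, c; e, f, g] ≤ 1 := by
  have hP : 0 ≤ a*c - b^2 := by nlinarith [sq_nonneg (a*g + c*e - 2*b*f)]
  have hQ : 0 ≤ e*g - f^2 := by nlinarith [sq_nonneg (a*g + c*e - 2*b*f)]
  have hB : (a*g + c*e - 2*b*f)^2 = 4 * (a*c - b^2) * (e*g - f^2) := by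
    linear_combination -4 * hΔ
  have h₁ : a*f - b*e = 0 :=
    eq_zero_of_sq_eq_mul_sub_of_sq_eq (x := a) (y := e) hP hQ hB (by ring)
  have h₃ : b*g - c*f = 0 :=
    eq_zero_of_sq_eq_mul_sub_of_sq_eq (x := c) (y := g) hP hQ hB (by ring)
  have h₂ : a*g - c*e = 0 :=
    pow_eq_zero_iff two_ne_zero |>.mp (by linear_combination -4 * hΔ + 4 * (b*g - c*f) * h₁)
  apply Matrix.rank_le_one_of_mul_eq_mul
  intro i i' j j'
  fin_cases i <;> fin_cases i' <;> fin_cases j <;> fin_cases j' <;>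
    simp only [Fin.zero_eta, Fin.mk_one, Fin.isValue, Fin.reduceFinMk, Matrix.of_apply,
      Matrix.cons_val', Matrix.cons_val, Matrix.cons_val_zero, Matrix.cons_val_one,
      Matrix.cons_val_fin_one] <;>
    linarith
end
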